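/- arXiv:2309.09707 — 2 statements merged into one kernel-verified Lean document; each statement's English description precedes it below -/
import Mathlib

section
/- Suppose every element i of a finite set T has exactly one successor and exactly one predecessor in a relation l ⊆ (T ∪ {s}) × (T ∪ {t}), where the successor of i lies in T ∪ {t}, the predecessor of j lies in T ∪ {s}, and no element of T is its own successor. Then the relation l decomposes T into a disjoint union of finite chains, each starting at an element whose predecessor is s and ending at an element whose successor is t, provided the relation restricted to T × T is acyclic. Consequently, the number of chains equals both the number of i ∈ T with successor t and the number of j ∈ T with predecessor s. -/
/-!
Every source `a` (a trip with `g a = none`) starts the walk `a, f a, f (f a), …`. By acyclicity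
the walk never revisits a trip, so after at most `#T` steps it stops at a trip without successor.
Walking backwards along `g` from any trip reaches a source, and as `f` is injective on `T`, two
sources never reach the same trip; hence the walks from the sources partition `T`. For the count,
`f` is a bijection from the trips having a successor onto those having a predecessor.
-/

open Function Relation

section

variable {ι : Type*} {T : Finset ι} {f g : ι → Option ι} {a b c i : ι}

def succRel (T : Finset ι) (f : ι → Option ι) (a b : ι) : Prop :=
  a ∈ T ∧ b ∈ T ∧ f a = some b

def succWalk (f : ι → Option ι) : ℕ → ι → List ι
  | 0, a => [a]
  | n + 1, a =>
    match f a with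
    | none => [a]
    | some b => a :: succWalk f n b

section succWalk

variable (f) (n : ℕ)

lemma succWalk_succ_of_eq_none (h : f a = none) : succWalk f (n + 1) a = [a] := by
  simp [succWalk, h]

lemma succWalk_succ_of_eq_some (h : f a = some b) :
    succWalk f (n + 1) a = a :: succWalk f n b := by
  simp [succWalk, h]

lemma exists_succWalk_eq_cons (a : ι) : ∃ l, succWalk f n a = a :: l := by
  cases n with
  | zero => exact ⟨[], rfl⟩
  | succ n =>
    cases h : f a with
    | none => exact ⟨[], succWalk_succ_of_eq_none f n h⟩
    | some b => exact ⟨_, succWalk_succ_of_eq_some f n h⟩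

lemma succWalk_ne_nil (a : ι) : succWalk f n a ≠ [] := by
  obtain ⟨l, hl⟩ := exists_succWalk_eq_cons f n a
  simp [hl]

lemma head_succWalk (a : ι) : (succWalk f n a).head (succWalk_ne_nil f n a) = a := by
  obtain ⟨l, hl⟩ := exists_succWalk_eq_cons f n a
  simp [hl]

lemma succWalk_injective : Injective (succWalk f n) := fun a a' h => by
  simpa only [h, head_succWalk] using (head_succWalk f n a).symm

lemma isChain_succWalk (a : ι) : (succWalk f n a).IsChain (fun x y => f x = some y) := by
  induction n generalizing a with
  | zero => exact List.isChain_singleton a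
  | succ n ih =>
    cases h : f a with
    | none => simp [succWalk_succ_of_eq_none f n h]
    | some b =>
      obtain ⟨l, hl⟩ := exists_succWalk_eq_cons f n b
      rw [succWalk_succ_of_eq_some f n h, hl, List.isChain_cons_cons]
      exact ⟨h, hl ▸ ih b⟩

lemma getLast_succWalk_eq_none_or_length_eq (a : ι) :
    f ((succWalk f n a).getLast (succWalk_ne_nil f n a)) = none ∨
      (succWalk f n a).length = n + 1 := by
  induction n generalizing a with
  | zero => cases h : f a <;> simp [succWalk, h]
  | succ n ih =>
    cases h : f a with
    | none => simp [succWalk_succ_of_eq_none f n h, h]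
    | some b =>
      simp only [succWalk_succ_of_eq_some f n h, List.length_cons, add_left_inj,
        List.getLast_cons (succWalk_ne_nil f n b)]
      exact ih b

end succWalk

lemma List.mem_of_isChain_of_getLast_eq_none {L : List ι}
    (hL : L.IsChain (fun x y => f x = some y)) (hne : L ≠ [])
    (hlast : f (L.getLast hne) = none) (hb : b ∈ L) (hbc : f b = some c) : c ∈ L := by
  induction L with
  | nil => exact absurd rfl hne
  | cons x t ih =>
    cases t with
    | nil =>
      obtain rfl : b = x := by simpa using hb
      simp_all
    | cons y t =>
      rw [List.isChain_cons_cons] at hL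
      rcases List.mem_cons.mp hb with rfl | hb
      · simp [Option.some_inj.mp (hL.1.symm.trans hbc)]
      · exact List.mem_cons_of_mem x (ih hL.2 (List.cons_ne_nil y t) hlast hb)

lemma mem_of_eq_some_of_mem (hfT : ∀ i ∈ T, f i = none ∨ ∃ j ∈ T, f i = some j)
    (ha : a ∈ T) (h : f a = some b) : b ∈ T := by
  obtain ⟨j, hj, hfj⟩ := (hfT a ha).resolve_left (by simp [h])
  rwa [Option.some_inj.mp (h.symm.trans hfj)]

lemma mem_of_reflTransGen_succRel (ha : a ∈ T) (h : ReflTransGen (succRel T f) a b) :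
    b ∈ T := by
  rcases h.cases_tail with rfl | ⟨c, -, -, hb, -⟩
  exacts [ha, hb]

section Acyclic

variable (hfT : ∀ i ∈ T, f i = none ∨ ∃ j ∈ T, f i = some j)
  (hacyc : ∀ i, ¬ TransGen (succRel T f) i i)
include hfT

lemma reflTransGen_of_mem_succWalk (ha : a ∈ T) {n : ℕ} (hb : b ∈ succWalk f n a) :
    ReflTransGen (succRel T f) a b :=
  (isChain_succWalk f n a).induction (ReflTransGen (succRel T f) a) _
    (fun x y hxy hax =>
      have hx := mem_of_reflTransGen_succRel ha hax
      hax.tail ⟨hx, mem_of_eq_some_of_mem hfT hx hxy, hxy⟩)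
    (fun _ => by rw [head_succWalk]) b hb

include hacyc

lemma nodup_succWalk (n : ℕ) (ha : a ∈ T) : (succWalk f n a).Nodup := by
  induction n generalizing a with
  | zero => simp [succWalk]
  | succ n ih =>
    cases h : f a with
    | none => simp [succWalk_succ_of_eq_none f n h]
    | some b =>
      have hab : succRel T f a b := ⟨ha, mem_of_eq_some_of_mem hfT ha h, h⟩
      rw [succWalk_succ_of_eq_some f n h, List.nodup_cons]
      exact ⟨fun hmem => hacyc a (.head' hab (reflTransGen_of_mem_succWalk hfT hab.2.1 hmem)),
        ih hab.2.1⟩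

lemma length_succWalk_le_card (n : ℕ) (ha : a ∈ T) : (succWalk f n a).length ≤ T.card := by
  classical
  rw [← List.toFinset_card_of_nodup (nodup_succWalk hfT hacyc n ha)]
  exact Finset.card_le_card fun k hk =>
    mem_of_reflTransGen_succRel ha
      (reflTransGen_of_mem_succWalk hfT ha (List.mem_toFinset.mp hk))

lemma getLast_succWalk_card_eq_none (ha : a ∈ T) :
    f ((succWalk f T.card a).getLast (succWalk_ne_nil f T.card a)) = none :=
  (getLast_succWalk_eq_none_or_length_eq f T.card a).resolve_right
    (by have := length_succWalk_le_card hfT hacyc T.card ha; omega)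

lemma mem_succWalk_card_of_reflTransGen (ha : a ∈ T) (h : ReflTransGen (succRel T f) a b) :
    b ∈ succWalk f T.card a := by
  induction h with
  | refl => simpa [head_succWalk] using List.head_mem (succWalk_ne_nil f T.card a)
  | tail _ hbc ih =>
    exact List.mem_of_isChain_of_getLast_eq_none (isChain_succWalk f T.card a) _
      (getLast_succWalk_card_eq_none hfT hacyc ha) ih hbc.2.2

end Acyclic

section Converse

variable (hfg : ∀ i ∈ T, ∀ j ∈ T, (f i = some j ↔ g j = some i))
include hfg

lemma succRel_eq_swap : succRel T g = swap (succRel T f) := by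
  ext a b
  exact ⟨fun ⟨ha, hb, h⟩ => ⟨hb, ha, (hfg b hb a ha).mpr h⟩,
    fun ⟨hb, ha, h⟩ => ⟨ha, hb, (hfg b hb a ha).mp h⟩⟩

lemma exists_eq_none_reflTransGen (hgT : ∀ j ∈ T, g j = none ∨ ∃ i ∈ T, g j = some i)
    (hacyc : ∀ i, ¬ TransGen (succRel T f) i i) (hi : i ∈ T) :
    ∃ a ∈ T, g a = none ∧ ReflTransGen (succRel T f) a i := by
  have hacyc' : ∀ i, ¬ TransGen (succRel T g) i i := by
    simpa only [succRel_eq_swap hfg, transGen_swap] using hacyc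
  have hia :=
    reflTransGen_of_mem_succWalk hgT hi (List.getLast_mem (succWalk_ne_nil g T.card i))
  refine ⟨_, mem_of_reflTransGen_succRel hi hia,
    getLast_succWalk_card_eq_none hgT hacyc' hi, ?_⟩
  rwa [succRel_eq_swap hfg, reflTransGen_swap] at hia

lemma eq_of_reflTransGen_of_eq_none {a a' : ι} (ha : g a = none) (ha' : g a' = none)
    (h : ReflTransGen (succRel T f) a i) (h' : ReflTransGen (succRel T f) a' i) : a = a' := by
  have hunique : Relator.RightUnique (swap (succRel T f)) :=
    fun x y z ⟨hy, hx, hxy⟩ ⟨hz, _, hxz⟩ =>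
      Option.some_inj.mp (((hfg y hy x hx).mp hxy).symm.trans ((hfg z hz x hx).mp hxz))
  have hsource : ∀ {x y}, g x = none → ReflTransGen (swap (succRel T f)) x y → x = y :=
    fun hx hxy => hxy.cases_head.resolve_right
      fun ⟨c, ⟨hc, hx', hcx⟩, _⟩ => by simpa [hx] using (hfg c hc _ hx').mp hcx
  rcases ReflTransGen.total_of_right_unique hunique
    (reflTransGen_swap.mpr h) (reflTransGen_swap.mpr h') with h | h
  exacts [hsource ha h, (hsource ha' h).symm]

end Converse

section Matching

variable (hfT : ∀ i ∈ T, f i = none ∨ ∃ j ∈ T, f i = some j)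
  (hfg : ∀ i ∈ T, ∀ j ∈ T, (f i = some j ↔ g j = some i))
include hfT hfg

lemma mapsTo_getD_filter_ne_none :
    Set.MapsTo (fun i => (f i).getD i) (T.filter fun i => ¬ f i = none)
      (T.filter fun j => ¬ g j = none) := by
  intro i hi
  obtain ⟨hiT, hfi⟩ := Finset.mem_filter.mp hi
  obtain ⟨j, hj, hij⟩ := (hfT i hiT).resolve_left hfi
  simp [hij, hj, (hfg i hiT j hj).mp hij]

lemma leftInvOn_getD_filter_ne_none :
    Set.LeftInvOn (fun j => (g j).getD j) (fun i => (f i).getD i)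
      (T.filter fun i => ¬ f i = none) := by
  intro i hi
  obtain ⟨hiT, hfi⟩ := Finset.mem_filter.mp hi
  obtain ⟨j, hj, hij⟩ := (hfT i hiT).resolve_left hfi
  simp [hij, (hfg i hiT j hj).mp hij]

lemma card_filter_eq_none_eq (hgT : ∀ j ∈ T, g j = none ∨ ∃ i ∈ T, g j = some i) :
    (T.filter (f · = none)).card = (T.filter (g · = none)).card := by
  have hgf : ∀ j ∈ T, ∀ i ∈ T, (g j = some i ↔ f i = some j) :=
    fun j hj i hi => (hfg i hi j hj).symm
  have hsome : (T.filter fun i => ¬ f i = none).card = (T.filter fun j => ¬ g j = none).card :=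
    Finset.card_nbij' _ _ (mapsTo_getD_filter_ne_none hfT hfg)
      (mapsTo_getD_filter_ne_none hgT hgf) (leftInvOn_getD_filter_ne_none hfT hfg)
      (leftInvOn_getD_filter_ne_none hgT hgf)
  have hf := Finset.card_filter_add_card_filter_not (s := T) (f · = none)
  have hg := Finset.card_filter_add_card_filter_not (s := T) (g · = none)
  omega

end Matching

end

theorem sdvsp_chain_decomposition_general {ι : Type*}
    (T : Finset ι) (f g : ι → Option ι)
    -- successor of i ∈ T lies in T ∪ {t}
    (hfT : ∀ i ∈ T, f i = none ∨ ∃ j ∈ T, f i = some j)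
    -- predecessor of j ∈ T lies in T ∪ {s}
    (hgT : ∀ j ∈ T, g j = none ∨ ∃ i ∈ T, g j = some i)
    -- successor/predecessor consistency (each trip has exactly one of each)
    (hfg : ∀ i ∈ T, ∀ j ∈ T, (f i = some j ↔ g j = some i))
    -- the relation restricted to T × T is acyclic
    (hacyc : ∀ i, ¬ Relation.TransGen (fun a b => a ∈ T ∧ b ∈ T ∧ f a = some b) i i) :
    ∃ chains : Finset (List ι),
      -- every trip belongs to exactly one chain
      (∀ i ∈ T, ∃! L, L ∈ chains ∧ i ∈ L) ∧
      -- each chain is a nonempty sequence of trips starting after s and ending before t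
      (∀ L ∈ chains, ∃ h : L ≠ [],
        (∀ i ∈ L, i ∈ T) ∧
        g (L.head h) = none ∧
        f (L.getLast h) = none ∧
        List.Chain' (fun a b => f a = some b) L) ∧
      -- the number of chains equals the number of trips whose successor is t
      chains.card = (T.filter fun i => f i = none).card ∧
      -- and the number of trips whose predecessor is s
      chains.card = (T.filter fun j => g j = none).card := by
  classical
  have hcard :=
    Finset.card_image_of_injective (T.filter (g · = none)) (succWalk_injective f T.card)
  refine ⟨(T.filter (g · = none)).image (succWalk f T.card), fun i hi => ?_, fun L hL => ?_,
    hcard.trans (card_filter_eq_none_eq hfT hfg hgT).symm, hcard⟩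
  · obtain ⟨a, ha, hga, hai⟩ := exists_eq_none_reflTransGen hfg hgT hacyc hi
    refine ⟨succWalk f T.card a, ⟨Finset.mem_image_of_mem _ (by simp [ha, hga]),
      mem_succWalk_card_of_reflTransGen hfT hacyc ha hai⟩, ?_⟩
    rintro _ ⟨hL, hiL⟩
    obtain ⟨a', ⟨ha'T, hga'⟩, rfl⟩ := by simpa using hL
    rw [eq_of_reflTransGen_of_eq_none hfg hga' hga
      (reflTransGen_of_mem_succWalk hfT ha'T hiL) hai]
  · obtain ⟨a, ⟨ha, hga⟩, rfl⟩ := by simpa using hL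
    refine ⟨succWalk_ne_nil f T.card a,
      fun i hi => mem_of_reflTransGen_succRel ha (reflTransGen_of_mem_succWalk hfT ha hi),
      by rwa [head_succWalk], getLast_succWalk_card_eq_none hfT hacyc ha,
      isChain_succWalk f T.card a⟩

/-- the SDVSP assignment constraints decompose the trips into disjoint
chains from the depot source `s` (encoded as predecessor `none`) to the depot sink `t`
(encoded as successor `none`). `f i` is the successor of `i` in `T ∪ {t}` and `g j` is
the predecessor of `j` in `T ∪ {s}`, with `none` standing for the depot. -/
theorem sdvsp_chain_decomposition {ι : Type*} [DecidableEq ι]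
    (T : Finset ι) (f g : ι → Option ι)
    -- successor of i ∈ T lies in T ∪ {t}
    (hfT : ∀ i ∈ T, f i = none ∨ ∃ j ∈ T, f i = some j)
    -- predecessor of j ∈ T lies in T ∪ {s}
    (hgT : ∀ j ∈ T, g j = none ∨ ∃ i ∈ T, g j = some i)
    -- successor/predecessor consistency (each trip has exactly one of each)
    (hfg : ∀ i ∈ T, ∀ j ∈ T, (f i = some j ↔ g j = some i))
    -- no element of T is its own successor
    (hirr : ∀ i ∈ T, f i ≠ some i)
    -- the relation restricted to T × T is acyclic
    (hacyc : ∀ i, ¬ Relation.TransGen (fun a b => a ∈ T ∧ b ∈ T ∧ f a = some b) i i) :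
    ∃ chains : Finset (List ι),
      -- every trip belongs to exactly one chain
      (∀ i ∈ T, ∃! L, L ∈ chains ∧ i ∈ L) ∧
      -- each chain is a nonempty sequence of trips starting after s and ending before t
      (∀ L ∈ chains, ∃ h : L ≠ [],
        (∀ i ∈ L, i ∈ T) ∧
        g (L.head h) = none ∧
        f (L.getLast h) = none ∧
        List.Chain' (fun a b => f a = some b) L) ∧
      -- the number of chains equals the number of trips whose successor is t
      chains.card = (T.filter fun i => f i = none).card ∧
      -- and the number of trips whose predecessor is s
      chains.card = (T.filter fun j => g j = none).card :=
  sdvsp_chain_decomposition_general T f g hfT hgT hfg hacyc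
end

section
/- A bus run of blocks i₁, …, i_k (with the SOC dynamics b_{m+1} = b_m − B_m + u_m, 0 ≤ u_m ≤ min(B̄ − b_m + B_m, (T^α_{m+1} − T^β_m)R^δ), b_m ≤ B̄) is feasible with greedy maximal charging if and only if it is feasible under some admissible charging policy. That is, if there exist charges u_m making b_m ≥ B_m for all m starting from b₁ = B̄, then choosing u_m = min(B̄ − (b_m − B_m), (T^α_{m+1} − T^β_m)R^δ) at each step also yields b_m ≥ B_m for all m. -/
/-- greedy maximal charging dominates: if some admissible charging policy
makes the run feasible, then greedy maximal charging also makes it feasible. -/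
theorem greedy_charging_dominates (k : ℕ) (Bbar Rδ : ℝ) (Bc g : ℕ → ℝ)
    (hBbar : 0 < Bbar) (hRδ : 0 < Rδ)
    (hBc : ∀ m, 0 ≤ Bc m ∧ Bc m ≤ Bbar) (hg : ∀ m, 0 ≤ g m)
    -- some admissible charging policy u with trajectory b is feasible
    (b u : ℕ → ℝ)
    (hb0 : b 0 = Bbar)
    (hrec : ∀ m, b (m + 1) = b m - Bc m + u m)
    (hu : ∀ m, 0 ≤ u m ∧ u m ≤ min (Bbar - b m + Bc m) (g m * Rδ))
    (hfeas : ∀ m < k, Bc m ≤ b m) :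
    -- then the greedy maximal-charging trajectory is feasible as well
    ∀ b' : ℕ → ℝ, b' 0 = Bbar →
      (∀ m, b' (m + 1) = min Bbar (b' m - Bc m + g m * Rδ)) →
      ∀ m < k, Bc m ≤ b' m := by
  intro b' hb'0 hrec'
  have key : ∀ m, b m ≤ b' m := by
    intro m
    induction m with
    | zero => rw [hb0, hb'0]
    | succ n ih =>
      rw [hrec n, hrec' n]
      have h1 := (hu n).2
      refine le_min ?_ ?_
      · have := h1.trans (min_le_left _ _)
        linarith
      · have := h1.trans (min_le_right _ _)
        linarith
  intro m hm
  exact (hfeas m hm).trans (key m)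
end
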